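/- The Grossman–Larson product U∗V := U₍₁₎·(U₍₂₎▷V) on the tensor algebra T(M) over a magmatic algebra is associative with unit 1. -/

import Mathlib

open TensorProduct TensorAlgebra

variable (k M : Type*) [CommRing k] [AddCommGroup M] [Module k M]

/-- The linear map sending `x ∈ M` to the primitive element `ι x ⊗ 1 + 1 ⊗ ι x`. -/
noncomputable def primMap : M →ₗ[k] TensorAlgebra k M ⊗[k] TensorAlgebra k M :=
  ((TensorProduct.mk k (TensorAlgebra k M) (TensorAlgebra k M)).flip 1).comp (ι k) +
    (TensorProduct.mk k (TensorAlgebra k M) (TensorAlgebra k M) 1).comp (ι k)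

/-- The unshuffle coproduct on the tensor algebra: the unique algebra morphism
`Δ : T(M) → T(M) ⊗ T(M)` for which every element of `M` is primitive. -/
noncomputable def unshuffle :
    TensorAlgebra k M →ₐ[k] TensorAlgebra k M ⊗[k] TensorAlgebra k M :=
  TensorAlgebra.lift k (primMap k M)

/-- The counit of the tensor algebra: the algebra morphism killing `M`. -/
noncomputable def counit : TensorAlgebra k M →ₐ[k] k :=
  TensorAlgebra.lift k (0 : M →ₗ[k] k)

/-- The Grossman–Larson product `U ∗ V := U₍₁₎ · (U₍₂₎ ▷ V)` on the tensor algebra,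
built from the unshuffle coproduct and the extended product `t`. -/
noncomputable def glProd {k M : Type*} [CommRing k] [AddCommGroup M] [Module k M]
    (t : TensorAlgebra k M →ₗ[k] TensorAlgebra k M →ₗ[k] TensorAlgebra k M)
    (U V : TensorAlgebra k M) : TensorAlgebra k M :=
  LinearMap.mul' k (TensorAlgebra k M)
    (TensorProduct.map LinearMap.id (t.flip V) (unshuffle k M U))

/-! For each `x : M`, `ι x ▷ -` is a derivation of `T(M)` mapping `M` into `M`, hence a
coderivation of `Δ`. Expanding `Δ (ι x · b)` then gives
`(ι x · b) ∗ V = ι x ∗ (b ∗ V) - (ι x ▷ b) ∗ V`, and since `ι x ∗ Y = ι x · Y + ι x ▷ Y`,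
the same identity yields associativity when the first factor is some `ι x`. Associativity in
general follows by induction on the degree of the first factor, which `ι x ▷ -` preserves.
The units come from `1 ▷ V = V` and from `U ▷ 1 = ε(U)` together with the counit law of `Δ`. -/

variable {k M}

local notation "𝕋" => TensorAlgebra k M
local notation "Δ" => unshuffle k M
local notation "𝕋₁" => LinearMap.range (ι k : M →ₗ[k] TensorAlgebra k M)

@[simp]
lemma unshuffle_ι (x : M) : Δ (ι k x) = ι k x ⊗ₜ[k] 1 + 1 ⊗ₜ[k] ι k x := by
  simp [unshuffle, primMap]

@[simp]
lemma counit_ι (x : M) : counit k M (ι k x) = 0 := by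
  simp [counit]

lemma rid_map_counit_unshuffle (U : 𝕋) :
    Algebra.TensorProduct.rid k k 𝕋
      (Algebra.TensorProduct.map (AlgHom.id k 𝕋) (counit k M) (Δ U)) = U := by
  suffices h : ((Algebra.TensorProduct.rid k k 𝕋 : 𝕋 ⊗[k] k →ₐ[k] 𝕋).comp
      ((Algebra.TensorProduct.map (AlgHom.id k 𝕋) (counit k M)).comp Δ)) = AlgHom.id k 𝕋 from
    DFunLike.congr_fun h U
  ext x
  simp

section Leibniz

variable {A B : Type*} [Ring A] [Algebra k A] [Ring B] [Algebra k B] {D : A →ₗ[k] A}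

lemma map_one_eq_zero_of_leibniz (hD : ∀ a b, D (a * b) = D a * b + a * D b) : D 1 = 0 := by
  simpa using hD 1 1

lemma rTensor_mul_of_leibniz (hD : ∀ a b, D (a * b) = D a * b + a * D b) (z w : A ⊗[k] B) :
    D.rTensor B (z * w) = D.rTensor B z * w + z * D.rTensor B w := by
  induction z using TensorProduct.induction_on with
  | zero => simp
  | add z z' hz hz' => simp only [add_mul, map_add, hz, hz']; abel
  | tmul a b =>
    induction w using TensorProduct.induction_on with
    | zero => simp
    | add w w' hw hw' => simp only [mul_add, map_add, hw, hw']; abel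
    | tmul c d => simp [hD, add_tmul]

lemma lTensor_mul_of_leibniz (hD : ∀ a b, D (a * b) = D a * b + a * D b) (z w : B ⊗[k] A) :
    D.lTensor B (z * w) = D.lTensor B z * w + z * D.lTensor B w := by
  induction z using TensorProduct.induction_on with
  | zero => simp
  | add z z' hz hz' => simp only [add_mul, map_add, hz, hz']; abel
  | tmul a b =>
    induction w using TensorProduct.induction_on with
    | zero => simp
    | add w w' hw hw' => simp only [mul_add, map_add, hw, hw']; abel
    | tmul c d => simp [hD, tmul_add]

end Leibniz

section DerivationOfTensorAlgebra

variable {D : TensorAlgebra k M →ₗ[k] TensorAlgebra k M}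

lemma map_mem_pow_of_leibniz (hD : ∀ a b : 𝕋, D (a * b) = D a * b + a * D b)
    (hDι : ∀ y, D (ι k y) ∈ 𝕋₁) {n : ℕ} {U : 𝕋} (hU : U ∈ 𝕋₁ ^ n) :
    D U ∈ 𝕋₁ ^ n := by
  induction hU using Submodule.pow_induction_on_left' with
  | algebraMap r =>
    simp [Algebra.algebraMap_eq_smul_one, map_one_eq_zero_of_leibniz hD]
  | add a b i _ _ ha hb => rw [map_add]; exact add_mem ha hb
  | mem_mul a ha i b hb ih =>
    obtain ⟨y, rfl⟩ := ha
    rw [hD, pow_succ']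
    exact add_mem (Submodule.mul_mem_mul (hDι y) hb) (Submodule.mul_mem_mul ⟨y, rfl⟩ ih)

lemma unshuffle_map_of_leibniz (hD : ∀ a b : 𝕋, D (a * b) = D a * b + a * D b)
    (hDι : ∀ y, D (ι k y) ∈ 𝕋₁) (U : 𝕋) :
    Δ (D U) = D.rTensor 𝕋 (Δ U) + D.lTensor 𝕋 (Δ U) := by
  induction U using TensorAlgebra.induction with
  | algebraMap r =>
    simp [Algebra.algebraMap_eq_smul_one, map_one_eq_zero_of_leibniz hD,
      Algebra.TensorProduct.one_def]
  | ι y =>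
    obtain ⟨z, hz⟩ := hDι y
    simp [← hz, map_one_eq_zero_of_leibniz hD]
  | mul a b ha hb =>
    rw [hD, map_add, map_mul, map_mul, ha, hb, map_mul, rTensor_mul_of_leibniz hD,
      lTensor_mul_of_leibniz hD]
    simp only [add_mul, mul_add]
    abel
  | add a b ha hb => simp only [map_add, ha, hb]; abel

end DerivationOfTensorAlgebra

lemma TensorAlgebra.induction_on_ι_mul {P : 𝕋 → Prop} (D : M → 𝕋 → 𝕋)
    (hD : ∀ x n, ∀ U ∈ 𝕋₁ ^ n, D x U ∈ 𝕋₁ ^ n)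
    (algebraMap : ∀ r, P (algebraMap k 𝕋 r)) (add : ∀ a b, P a → P b → P (a + b))
    (ι_mul : ∀ x b, P b → P (D x b) → P (ι k x * b)) (U : 𝕋) : P U := by
  have homogeneous : ∀ n, ∀ U ∈ 𝕋₁ ^ n, P U := by
    intro n
    induction n with
    | zero =>
      intro U hU
      obtain ⟨r, rfl⟩ := Submodule.mem_one.mp (pow_zero 𝕋₁ ▸ hU)
      exact algebraMap r
    | succ n ih =>
      intro U hU
      rw [pow_succ'] at hU
      refine Submodule.mul_induction_on hU (fun a ha b hb => ?_) add
      obtain ⟨x, rfl⟩ := ha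
      exact ι_mul x b (ih b hb) (ih _ (hD x n b hb))
  induction U using DirectSum.Decomposition.inductionOn (fun n => 𝕋₁ ^ n) with
  | zero => simpa using algebraMap 0
  | homogeneous U => exact homogeneous _ U U.2
  | add a b ha hb => exact add a b ha hb

section GrossmanLarson

variable (t : TensorAlgebra k M →ₗ[k] TensorAlgebra k M →ₗ[k] TensorAlgebra k M)

noncomputable def glProdTensor (V : 𝕋) : 𝕋 ⊗[k] 𝕋 →ₗ[k] 𝕋 :=
  LinearMap.mul' k 𝕋 ∘ₗ (t.flip V).lTensor 𝕋

lemma glProd_eq_glProdTensor (U V : 𝕋) : glProd t U V = glProdTensor t V (Δ U) := rfl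

lemma glProd_add (U U' V : 𝕋) : glProd t (U + U') V = glProd t U V + glProd t U' V := by
  simp only [glProd_eq_glProdTensor, map_add]

lemma glProd_sub (U U' V : 𝕋) : glProd t (U - U') V = glProd t U V - glProd t U' V := by
  simp only [glProd_eq_glProdTensor, map_sub]

lemma glProd_smul (r : k) (U V : 𝕋) : glProd t (r • U) V = r • glProd t U V := by
  simp only [glProd_eq_glProdTensor, map_smul]

lemma one_glProd (hone : ∀ W, t 1 W = W) (V : 𝕋) : glProd t 1 V = V := by
  simp [glProd_eq_glProdTensor, glProdTensor, Algebra.TensorProduct.one_def, hone]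

lemma glProd_one (hcounit : ∀ U, t U 1 = algebraMap k 𝕋 (counit k M U)) (U : 𝕋) :
    glProd t U 1 = U := by
  suffices h : ∀ z, glProdTensor t 1 z = Algebra.TensorProduct.rid k k 𝕋
      (Algebra.TensorProduct.map (AlgHom.id k 𝕋) (counit k M) z) by
    rw [glProd_eq_glProdTensor, h, rid_map_counit_unshuffle]
  intro z
  induction z using TensorProduct.induction_on with
  | zero => simp
  | tmul a b => simp [glProdTensor, hcounit, Algebra.algebraMap_eq_smul_one]
  | add z z' hz hz' => simp only [map_add, hz, hz']

lemma ι_glProd (hone : ∀ W, t 1 W = W) (x : M) (V : 𝕋) :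
    glProd t (ι k x) V = ι k x * V + t (ι k x) V := by
  simp [glProd_eq_glProdTensor, glProdTensor, hone]

lemma glProdTensor_unshuffle_ι_mul
    (hleib : ∀ (x : M) (V W : 𝕋), t (ι k x) (V * W) = t (ι k x) V * W + V * t (ι k x) W)
    (hassoc : ∀ (x : M) (V W : 𝕋), t (ι k x * V) W = t (ι k x) (t V W) - t (t (ι k x) V) W)
    (x : M) (V : 𝕋) (z : 𝕋 ⊗[k] 𝕋) :
    glProdTensor t V (Δ (ι k x) * z) =
      ι k x * glProdTensor t V z + t (ι k x) (glProdTensor t V z) -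
        glProdTensor t V ((t (ι k x)).rTensor 𝕋 z + (t (ι k x)).lTensor 𝕋 z) := by
  induction z using TensorProduct.induction_on with
  | zero => simp
  | tmul a b =>
    simp only [unshuffle_ι, glProdTensor, add_mul, Algebra.TensorProduct.tmul_mul_tmul, one_mul,
      map_add, LinearMap.comp_apply, LinearMap.lTensor_tmul, LinearMap.rTensor_tmul,
      LinearMap.flip_apply, LinearMap.mul'_apply, hassoc, hleib, mul_sub, mul_assoc]
    abel
  | add z z' hz hz' =>
    simp only [mul_add, map_add, hz, hz']
    abel

lemma ι_mul_glProd (m : M →ₗ[k] M →ₗ[k] M) (hone : ∀ W, t 1 W = W)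
    (hbase : ∀ x y : M, t (ι k x) (ι k y) = ι k (m x y))
    (hleib : ∀ (x : M) (V W : 𝕋), t (ι k x) (V * W) = t (ι k x) V * W + V * t (ι k x) W)
    (hassoc : ∀ (x : M) (V W : 𝕋), t (ι k x * V) W = t (ι k x) (t V W) - t (t (ι k x) V) W)
    (x : M) (b V : 𝕋) :
    glProd t (ι k x * b) V = glProd t (ι k x) (glProd t b V) - glProd t (t (ι k x) b) V := by
  have hΔ := unshuffle_map_of_leibniz (hleib x) (fun y => ⟨m x y, (hbase x y).symm⟩) b
  rw [glProd_eq_glProdTensor, map_mul, glProdTensor_unshuffle_ι_mul t hleib hassoc,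
    ← hΔ, ← glProd_eq_glProdTensor, ← glProd_eq_glProdTensor, ι_glProd t hone]

lemma ι_glProd_assoc (m : M →ₗ[k] M →ₗ[k] M) (hone : ∀ W, t 1 W = W)
    (hbase : ∀ x y : M, t (ι k x) (ι k y) = ι k (m x y))
    (hleib : ∀ (x : M) (V W : 𝕋), t (ι k x) (V * W) = t (ι k x) V * W + V * t (ι k x) W)
    (hassoc : ∀ (x : M) (V W : 𝕋), t (ι k x * V) W = t (ι k x) (t V W) - t (t (ι k x) V) W)
    (x : M) (V W : 𝕋) :
    glProd t (glProd t (ι k x) V) W = glProd t (ι k x) (glProd t V W) := by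
  rw [ι_glProd t hone, glProd_add, ι_mul_glProd t m hone hbase hleib hassoc, sub_add_cancel]

end GrossmanLarson

/-- The Grossman–Larson product `U ∗ V := U₍₁₎·(U₍₂₎▷V)` on the tensor
algebra over a magmatic algebra is associative with unit `1`. -/
theorem glProd_associative_unital {k M : Type*} [CommRing k] [AddCommGroup M] [Module k M]
    (m : M →ₗ[k] M →ₗ[k] M)
    (t : TensorAlgebra k M →ₗ[k] TensorAlgebra k M →ₗ[k] TensorAlgebra k M)
    (hone : ∀ W, t 1 W = W)
    (hcounit : ∀ U, t U 1 = algebraMap k (TensorAlgebra k M) (counit k M U))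
    (hbase : ∀ x y : M, t (ι k x) (ι k y) = ι k (m x y))
    (hleib : ∀ (x : M) (V W : TensorAlgebra k M),
      t (ι k x) (V * W) = t (ι k x) V * W + V * t (ι k x) W)
    (hassoc : ∀ (x : M) (V W : TensorAlgebra k M),
      t (ι k x * V) W = t (ι k x) (t V W) - t (t (ι k x) V) W) :
    (∀ U V W : TensorAlgebra k M, glProd t (glProd t U V) W = glProd t U (glProd t V W)) ∧
    (∀ V : TensorAlgebra k M, glProd t 1 V = V) ∧
    (∀ U : TensorAlgebra k M, glProd t U 1 = U) := by
  refine ⟨fun U => ?_, one_glProd t hone, glProd_one t hcounit⟩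
  have hdeg : ∀ x n, ∀ U ∈ LinearMap.range (ι k : M →ₗ[k] TensorAlgebra k M) ^ n,
      t (ι k x) U ∈ LinearMap.range (ι k : M →ₗ[k] TensorAlgebra k M) ^ n :=
    fun x _ _ => map_mem_pow_of_leibniz (hleib x) (fun y => ⟨m x y, (hbase x y).symm⟩)
  induction U using TensorAlgebra.induction_on_ι_mul (fun x => t (ι k x)) hdeg with
  | algebraMap r =>
    intro V W
    simp only [Algebra.algebraMap_eq_smul_one, glProd_smul, one_glProd t hone]
  | add a b ha hb =>
    intro V W
    simp only [glProd_add, ha, hb]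
  | ι_mul x b hb hxb =>
    intro V W
    have expand := ι_mul_glProd t m hone hbase hleib hassoc x
    rw [expand, glProd_sub, ι_glProd_assoc t m hone hbase hleib hassoc, hb, hxb, ← expand]
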